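/- For any submodule S ≤ M n, the F₂-dimension of the concatenated binary code Ĉ(S) equals n plus the F₂-dimension of S: finrank Ĉ(S) = n + finrank S. (Hence if dim S = n − k, then dim Ĉ(S) = 2n − k, so the self-dual CSS code with X- and Z-checks both given by Ĉ(S) encodes 4n − 2(2n−k) = 2k logical qubits.) -/

import Mathlib

/-- Binary symplectic representation of `n`-qubit Pauli operators (up to phase). -/
abbrev M (n : ℕ) : Type := Fin n → ZMod 2 × ZMod 2

/-- The symplectic form: two Paulis commute iff it vanishes. -/
def symp {n : ℕ} (u v : M n) : ZMod 2 :=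
  ∑ j, ((u j).1 * (v j).2 + (u j).2 * (v j).1)

/-- The inner `[[4,2,2]]` encoding of one qubit-pair symplectic entry. -/
def Emap (p : ZMod 2 × ZMod 2) : Fin 4 → ZMod 2 := ![p.1 + p.2, p.1, p.2, 0]

/-- Blockwise `[[4,2,2]]` encoding. -/
def Ehat {n : ℕ} (v : M n) : Fin n → Fin 4 → ZMod 2 := fun j => Emap (v j)

/-- The indicator vector of block `j` (the inner `XXXX`/`ZZZZ` stabilizer). -/
def beta {n : ℕ} (j : Fin n) : Fin n → Fin 4 → ZMod 2 :=
  fun j' _ => if j' = j then 1 else 0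

/-- The concatenated binary code `Ĉ(S)`. -/
def Chat {n : ℕ} (S : Submodule (ZMod 2) (M n)) :
    Submodule (ZMod 2) (Fin n → Fin 4 → ZMod 2) :=
  Submodule.span (ZMod 2) (Set.range (beta (n := n)) ∪ Ehat '' (S : Set (M n)))

/-- The standard dot product on the concatenated space. -/
def dotB {n : ℕ} (w w' : Fin n → Fin 4 → ZMod 2) : ZMod 2 :=
  ∑ j, ∑ i, w j i * w' j i

/-! `Ĉ(S)` is the direct sum of the span of the block indicators `β_j` and of `Ê(S)`, and `Ê` is
injective. Directness and the independence of the `β_j` both come from the fourth coordinate of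
each block: it vanishes on the image of `Ê` and reads off the coefficient of `β_j`. -/

open Module Submodule

section

variable {K V W ι : Type*} [Field K] [AddCommGroup V] [Module K V] [AddCommGroup W] [Module K W]

theorem finrank_sup_of_disjoint {s t : Submodule K W} [FiniteDimensional K s]
    [FiniteDimensional K t] (h : Disjoint s t) :
    finrank K ↥(s ⊔ t) = finrank K s + finrank K t := by
  have := finrank_sup_add_finrank_inf_eq s t
  rwa [h.eq_bot, finrank_bot, add_zero] at this

theorem finrank_span_range_sup_map [Fintype ι] [FiniteDimensional K V] (b : ι → W)
    (f : V →ₗ[K] W) (hf : Function.Injective f) (π : W →ₗ[K] ι → K)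
    (hπb : LinearIndependent K (π ∘ b)) (hπf : π ∘ₗ f = 0) (S : Submodule K V) :
    finrank K ↥(span K (Set.range b) ⊔ S.map f) = Fintype.card ι + finrank K S := by
  have := FiniteDimensional.span_of_finite K (Set.finite_range b)
  have hdisj : Disjoint (span K (Set.range b)) (S.map f) :=
    (range_ker_disjoint hπb).mono_right fun w ⟨v, _, hv⟩ => by
      rw [LinearMap.mem_ker, ← hv, ← LinearMap.comp_apply, hπf, LinearMap.zero_apply]
  rw [finrank_sup_of_disjoint hdisj, finrank_span_eq_card (hπb.of_comp π),
    (S.equivMapOfInjective f hf).finrank_eq]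

end

theorem Emap_add (p q : ZMod 2 × ZMod 2) : Emap (p + q) = Emap p + Emap q := by
  funext i
  fin_cases i <;> simp [Emap, add_add_add_comm]

theorem Emap_smul (c : ZMod 2) (p : ZMod 2 × ZMod 2) : Emap (c • p) = c • Emap p := by
  funext i
  fin_cases i <;> simp [Emap, mul_add]

def ehatLinearMap (n : ℕ) : M n →ₗ[ZMod 2] (Fin n → Fin 4 → ZMod 2) where
  toFun := Ehat
  map_add' u v := funext fun j => Emap_add (u j) (v j)
  map_smul' c u := funext fun j => Emap_smul c (u j)

theorem Ehat_injective (n : ℕ) : Function.Injective (Ehat (n := n)) := by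
  intro u v h
  funext j
  exact Prod.ext (congrFun (congrFun h j) 1) (congrFun (congrFun h j) 2)

def lastCoords (n : ℕ) : (Fin n → Fin 4 → ZMod 2) →ₗ[ZMod 2] Fin n → ZMod 2 :=
  LinearMap.pi fun j => LinearMap.proj 3 ∘ₗ LinearMap.proj j

theorem lastCoords_beta (n : ℕ) : lastCoords n ∘ beta = fun j => Pi.single j 1 := by
  ext j j'
  simp [lastCoords, beta, Pi.single_apply]

theorem lastCoords_comp_ehatLinearMap (n : ℕ) : lastCoords n ∘ₗ ehatLinearMap n = 0 := rfl

theorem Chat_eq_sup {n : ℕ} (S : Submodule (ZMod 2) (M n)) :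
    Chat S = span (ZMod 2) (Set.range beta) ⊔ S.map (ehatLinearMap n) := by
  rw [Chat, span_union, show Ehat '' (S : Set (M n)) = ehatLinearMap n '' S from rfl, span_image,
    span_eq]

theorem stmt3 (n : ℕ) (S : Submodule (ZMod 2) (M n)) :
    Module.finrank (ZMod 2) (Chat S) = n + Module.finrank (ZMod 2) S := by
  rw [Chat_eq_sup, finrank_span_range_sup_map beta _ (Ehat_injective n) (lastCoords n)
    (by rw [lastCoords_beta]; exact Pi.linearIndependent_single_one _ _)
    (lastCoords_comp_ehatLinearMap n), Fintype.card_fin]
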